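/- arXiv:math/9904062 — 5 statements merged into one kernel-verified Lean document; each statement's English description precedes it below -/
import Mathlib

section
/- Let a, b, c, d be positive integers with d dividing a+b+c and gcd(a,b,c,d) = 1. Then the number of integers k with 1 ≤ k ≤ d−1 such that none of ka, kb, kc is divisible by d and (ka mod d) + (kb mod d) + (kc mod d) = d equals (d + 2 − gcd(a,d) − gcd(b,d) − gcd(c,d))/2. -/
private lemma mod_pair (d x k : ℕ) (hd : 0 < d) (hk : k ≤ d) (h : ¬ d ∣ k * x) :
    k * x % d + (d - k) * x % d = d := by
  have hsum : k * x + (d - k) * x = d * x := by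
    rw [← Nat.add_mul]; congr 1; omega
  have hdvd : d ∣ k * x + (d - k) * x := by rw [hsum]; exact Dvd.intro x rfl
  have h1 : 0 < k * x % d := Nat.pos_of_ne_zero (fun hh => h (Nat.dvd_of_mod_eq_zero hh))
  have h2 : k * x % d < d := Nat.mod_lt _ hd
  have h3 : (d - k) * x % d < d := Nat.mod_lt _ hd
  have h4 : (k * x % d + (d - k) * x % d) % d = 0 := by
    rw [← Nat.add_mod]
    exact Nat.mod_eq_zero_of_dvd hdvd
  have hle : d ≤ k * x % d + (d - k) * x % d :=
    Nat.le_of_dvd (by omega) (Nat.dvd_of_mod_eq_zero h4)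
  have h5 : (k * x % d + (d - k) * x % d) % d
      = (k * x % d + (d - k) * x % d - d) % d := Nat.mod_eq_sub_mod hle
  have h6 : (k * x % d + (d - k) * x % d - d) % d
      = k * x % d + (d - k) * x % d - d := Nat.mod_eq_of_lt (by omega)
  omega

private lemma count_dvd (d x : ℕ) (hd : 0 < d) :
    ((Finset.Icc 1 (d-1)).filter (fun k => d ∣ k * x)).card = Nat.gcd x d - 1 := by
  set g := Nat.gcd x d with hg
  have hg0 : 0 < g := Nat.gcd_pos_of_pos_right x hd
  have hgd : g ∣ d := Nat.gcd_dvd_right x d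
  have hgx : g ∣ x := Nat.gcd_dvd_left x d
  have cop : Nat.Coprime (x / g) (d / g) := Nat.coprime_div_gcd_div_gcd hg0
  have hd'0 : 0 < d / g := Nat.div_pos (Nat.le_of_dvd hd hgd) hg0
  have hdd : g * (d / g) = d := Nat.mul_div_cancel' hgd
  have key : ∀ k, d ∣ k * x ↔ d / g ∣ k := by
    intro k
    constructor
    · intro h
      have h1 : d / g ∣ k * (x / g) := by
        have h2 : g * (d / g) ∣ g * (k * (x / g)) := by
          rw [hdd, show g * (k * (x/g)) = k * (g * (x/g)) by ring, Nat.mul_div_cancel' hgx]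
          exact h
        exact (Nat.mul_dvd_mul_iff_left hg0).1 h2
      exact cop.symm.dvd_of_dvd_mul_right h1
    · intro h
      have := Nat.mul_dvd_mul h hgx
      rwa [Nat.div_mul_cancel hgd] at this
  have hfe : (Finset.Icc 1 (d-1)).filter (fun k => d ∣ k * x)
      = (Finset.Ioc 0 (d-1)).filter (fun k => d / g ∣ k) := by
    rw [show Finset.Ioc 0 (d-1) = Finset.Icc 1 (d-1) from rfl]
    exact Finset.filter_congr (fun k _ => by simp [key k])
  rw [hfe, Nat.Ioc_filter_dvd_card_eq_div]
  -- (d-1) / (d/g) = g - 1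
  set d' := d / g with hd'
  have hle : d' ≤ g * d' := Nat.le_mul_of_pos_left _ hg0
  have hrw : d - 1 = (d' - 1) + (g - 1) * d' := by
    have h5 : (g - 1) * d' = g * d' - d' := by rw [Nat.sub_mul, one_mul]
    omega
  rw [hrw, Nat.add_mul_div_right _ _ hd'0, Nat.div_eq_of_lt (by omega), Nat.zero_add]

/-- Count of interior lattice points: the number of `k` with `1 ≤ k ≤ d-1` such that
none of `ka, kb, kc` is divisible by `d` and `(ka mod d) + (kb mod d) + (kc mod d) = d`
equals `(d + 2 - gcd(a,d) - gcd(b,d) - gcd(c,d))/2`. -/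
theorem stmt_1 (a b c d : ℕ) (ha : 0 < a) (hb : 0 < b) (hc : 0 < c) (hd : 0 < d)
    (hdvd : d ∣ a + b + c)
    (hgcd : Nat.gcd (Nat.gcd (Nat.gcd a b) c) d = 1) :
    2 * ((Finset.Icc 1 (d - 1)).filter
        (fun k => ¬ d ∣ k * a ∧ ¬ d ∣ k * b ∧ ¬ d ∣ k * c ∧
          k * a % d + k * b % d + k * c % d = d)).card
      + Nat.gcd a d + Nat.gcd b d + Nat.gcd c d = d + 2 := by
  classical
  set I := Finset.Icc 1 (d - 1) with hI
  have hmemI : ∀ k, k ∈ I ↔ 1 ≤ k ∧ k ≤ d - 1 := fun k => by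
    rw [hI, Finset.mem_Icc]
  -- flipped nondivisibility
  have ndvd : ∀ x k, k ≤ d → (d ∣ k * x ↔ d ∣ (d - k) * x) := by
    intro x k hk
    have hsum : (d - k) * x + k * x = d * x := by rw [← Nat.add_mul]; congr 1; omega
    have hdx : d ∣ d * x := Dvd.intro x rfl
    constructor
    · intro h
      have h2 := Nat.dvd_sub hdx h
      have h3 : d * x - k * x = (d - k) * x := by rw [Nat.sub_mul]
      rwa [h3] at h2
    · intro h
      have h2 := Nat.dvd_sub hdx h
      have h3 : d * x - (d - k) * x = k * x := by
        rw [Nat.sub_mul]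
        omega
      rwa [h3] at h2
  -- the third divisibility from the sum
  have hsum3 : ∀ k, d ∣ k * a + k * b + k * c := by
    intro k
    have h := Dvd.dvd.mul_left hdvd k
    rwa [Nat.mul_add, Nat.mul_add] at h
  -- no k in range has all three divisibilities
  have key3 : ∀ k, 1 ≤ k → k ≤ d - 1 → d ∣ k * a → d ∣ k * b → d ∣ k * c → False := by
    intro k hk1 hk2 h1 h2 h3
    have hab : d ∣ k * Nat.gcd a b := by
      have h := Nat.dvd_gcd h1 h2; rwa [Nat.gcd_mul_left] at h
    have habc : d ∣ k * Nat.gcd (Nat.gcd a b) c := by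
      have h := Nat.dvd_gcd hab h3; rwa [Nat.gcd_mul_left] at h
    have hkk : d ∣ k := by
      have h := Nat.dvd_gcd habc (dvd_mul_left d k)
      rwa [Nat.gcd_mul_left, hgcd, mul_one] at h
    have := Nat.le_of_dvd (by omega) hkk
    omega
  -- dichotomy of the sum of residues
  have dich : ∀ k, 1 ≤ k → k ≤ d - 1 → ¬ d ∣ k * a → ¬ d ∣ k * b → ¬ d ∣ k * c →
      k * a % d + k * b % d + k * c % d = d ∨ k * a % d + k * b % d + k * c % d = 2 * d := by
    intro k hk1 hk2 h1 h2 h3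
    have e1 : 0 < k * a % d := Nat.pos_of_ne_zero (fun hh => h1 (Nat.dvd_of_mod_eq_zero hh))
    have e2 : 0 < k * b % d := Nat.pos_of_ne_zero (fun hh => h2 (Nat.dvd_of_mod_eq_zero hh))
    have e3 : 0 < k * c % d := Nat.pos_of_ne_zero (fun hh => h3 (Nat.dvd_of_mod_eq_zero hh))
    have f1 : k * a % d < d := Nat.mod_lt _ hd
    have f2 : k * b % d < d := Nat.mod_lt _ hd
    have f3 : k * c % d < d := Nat.mod_lt _ hd
    have hmod : (k * a % d + k * b % d + k * c % d) % d = 0 := by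
      have hm : (k * a % d + k * b % d + k * c % d) % d = (k * a + k * b + k * c) % d :=
        ((Nat.mod_modEq (k * a) d).add (Nat.mod_modEq (k * b) d)).add
          (Nat.mod_modEq (k * c) d)
      rw [hm]
      exact Nat.mod_eq_zero_of_dvd (hsum3 k)
    obtain ⟨q, hq⟩ := Nat.dvd_of_mod_eq_zero hmod
    have hq3 : q < 3 := by
      have hlt : k * a % d + k * b % d + k * c % d < d * 3 := by omega
      rw [hq] at hlt
      exact Nat.lt_of_mul_lt_mul_left hlt
    have hq0 : 0 < q := by
      rcases Nat.eq_zero_or_pos q with h | h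
      · subst h; omega
      · exact h
    interval_cases q <;> omega
  -- pairing of residues under k ↦ d - k
  have pair : ∀ x k, k ≤ d → ¬ d ∣ k * x → k * x % d + (d - k) * x % d = d :=
    fun x k hk h => mod_pair d x k hd hk h
  set T := I.filter (fun k => ¬ d ∣ k * a ∧ ¬ d ∣ k * b ∧ ¬ d ∣ k * c ∧
      k * a % d + k * b % d + k * c % d = d) with hT
  set U := I.filter (fun k => ¬ d ∣ k * a ∧ ¬ d ∣ k * b ∧ ¬ d ∣ k * c ∧
      k * a % d + k * b % d + k * c % d = 2 * d) with hU
  set S := I.filter (fun k => ¬ d ∣ k * a ∧ ¬ d ∣ k * b ∧ ¬ d ∣ k * c) with hS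
  have hTU : T.card = U.card := by
    apply Finset.card_bij' (fun k _ => d - k) (fun k _ => d - k)
    · intro k hk
      rw [hT, Finset.mem_filter, hmemI] at hk
      obtain ⟨⟨hk1, hk2⟩, h1, h2, h3, hs⟩ := hk
      have hkd : k ≤ d := by omega
      rw [hU, Finset.mem_filter, hmemI]
      have e1 := pair a k hkd h1
      have e2 := pair b k hkd h2
      have e3 := pair c k hkd h3
      refine ⟨⟨by omega, by omega⟩, ?_, ?_, ?_, by omega⟩
      · exact fun hh => h1 ((ndvd a k hkd).2 hh)
      · exact fun hh => h2 ((ndvd b k hkd).2 hh)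
      · exact fun hh => h3 ((ndvd c k hkd).2 hh)
    · intro k hk
      rw [hU, Finset.mem_filter, hmemI] at hk
      obtain ⟨⟨hk1, hk2⟩, h1, h2, h3, hs⟩ := hk
      have hkd : k ≤ d := by omega
      rw [hT, Finset.mem_filter, hmemI]
      have e1 := pair a k hkd h1
      have e2 := pair b k hkd h2
      have e3 := pair c k hkd h3
      refine ⟨⟨by omega, by omega⟩, ?_, ?_, ?_, by omega⟩
      · exact fun hh => h1 ((ndvd a k hkd).2 hh)
      · exact fun hh => h2 ((ndvd b k hkd).2 hh)
      · exact fun hh => h3 ((ndvd c k hkd).2 hh)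
    · intro k hk
      rw [hT, Finset.mem_filter, hmemI] at hk
      omega
    · intro k hk
      rw [hU, Finset.mem_filter, hmemI] at hk
      omega
  have hSTU : S.card = T.card + U.card := by
    have hsplit := Finset.card_filter_add_card_filter_not
      (s := S) (p := fun k => k * a % d + k * b % d + k * c % d = d)
    have hT' : S.filter (fun k => k * a % d + k * b % d + k * c % d = d) = T := by
      ext k
      rw [hS, hT, Finset.mem_filter, Finset.mem_filter, Finset.mem_filter]
      tauto
    have hU' : S.filter (fun k => ¬ k * a % d + k * b % d + k * c % d = d) = U := by
      ext k
      rw [hS, hU, Finset.mem_filter, Finset.mem_filter, Finset.mem_filter, hmemI]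
      constructor
      · rintro ⟨⟨hkI, h1, h2, h3⟩, hne⟩
        rcases dich k hkI.1 hkI.2 h1 h2 h3 with h | h
        · omega
        · exact ⟨hkI, h1, h2, h3, h⟩
      · rintro ⟨hkI, h1, h2, h3, hs⟩
        exact ⟨⟨hkI, h1, h2, h3⟩, by omega⟩
    rw [hT', hU'] at hsplit
    omega
  -- counting S via complements
  set A := I.filter (fun k => d ∣ k * a) with hA
  set B := I.filter (fun k => d ∣ k * b) with hB
  set C := I.filter (fun k => d ∣ k * c) with hC
  have hAc : A.card = Nat.gcd a d - 1 := count_dvd d a hd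
  have hBc : B.card = Nat.gcd b d - 1 := count_dvd d b hd
  have hCc : C.card = Nat.gcd c d - 1 := count_dvd d c hd
  have hABd : Disjoint A B := by
    rw [Finset.disjoint_left]
    intro k hkA hkB
    rw [hA, Finset.mem_filter, hmemI] at hkA
    rw [hB, Finset.mem_filter] at hkB
    have h3 : d ∣ k * c := (Nat.dvd_add_right (hkA.2.add hkB.2)).1 (hsum3 k)
    exact key3 k hkA.1.1 hkA.1.2 hkA.2 hkB.2 h3
  have hACd : Disjoint A C := by
    rw [Finset.disjoint_left]
    intro k hkA hkC
    rw [hA, Finset.mem_filter, hmemI] at hkA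
    rw [hC, Finset.mem_filter] at hkC
    have h2 : d ∣ k * b := by
      have h := Nat.dvd_sub (hsum3 k) (hkA.2.add hkC.2)
      have he : k * a + k * b + k * c - (k * a + k * c) = k * b := by omega
      rwa [he] at h
    exact key3 k hkA.1.1 hkA.1.2 hkA.2 h2 hkC.2
  have hBCd : Disjoint B C := by
    rw [Finset.disjoint_left]
    intro k hkB hkC
    rw [hB, Finset.mem_filter, hmemI] at hkB
    rw [hC, Finset.mem_filter] at hkC
    have h1 : d ∣ k * a := by
      have h := Nat.dvd_sub (hsum3 k) (hkB.2.add hkC.2)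
      have he : k * a + k * b + k * c - (k * b + k * c) = k * a := by omega
      rwa [he] at h
    exact key3 k hkB.1.1 hkB.1.2 h1 hkB.2 hkC.2
  have hIcard : I.card = d - 1 := by
    rw [hI, Nat.card_Icc]
    omega
  have hScount : S.card + (A.card + B.card + C.card) = d - 1 := by
    have hsplit := Finset.card_filter_add_card_filter_not
      (s := I) (p := fun k => ¬ d ∣ k * a ∧ ¬ d ∣ k * b ∧ ¬ d ∣ k * c)
    have hneg : I.filter (fun k => ¬ (¬ d ∣ k * a ∧ ¬ d ∣ k * b ∧ ¬ d ∣ k * c))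
        = A ∪ B ∪ C := by
      ext k
      rw [Finset.mem_filter, Finset.mem_union, Finset.mem_union,
        hA, hB, hC, Finset.mem_filter, Finset.mem_filter, Finset.mem_filter]
      tauto
    have hcardU : (A ∪ B ∪ C).card = A.card + B.card + C.card := by
      rw [Finset.card_union_of_disjoint, Finset.card_union_of_disjoint hABd]
      rw [Finset.disjoint_union_left]
      exact ⟨hACd, hBCd⟩
    rw [hneg, hcardU, ← hS] at hsplit
    rw [← hIcard]
    omega
  have hga : 0 < Nat.gcd a d := Nat.gcd_pos_of_pos_right a hd
  have hgb : 0 < Nat.gcd b d := Nat.gcd_pos_of_pos_right b hd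
  have hgc : 0 < Nat.gcd c d := Nat.gcd_pos_of_pos_right c hd
  omega
end

section
/- Let a, b, c, d be positive integers with d dividing a+b+c and gcd(a,b,c,d) = 1. Then the number of integers k with 1 ≤ k ≤ d−1 such that d divides ka, d does not divide kb, d does not divide kc, and (kb mod d) + (kc mod d) = d, equals gcd(a,d) − 1. -/
/-- The number of `k` with `1 ≤ k ≤ d-1` such that `d ∣ ka`, `d ∤ kb`, `d ∤ kc` and
`(kb mod d) + (kc mod d) = d` equals `gcd(a,d) - 1`. -/
theorem stmt_2 (a b c d : ℕ) (ha : 0 < a) (hb : 0 < b) (hc : 0 < c) (hd : 0 < d)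
    (hdvd : d ∣ a + b + c)
    (hgcd : Nat.gcd (Nat.gcd (Nat.gcd a b) c) d = 1) :
    ((Finset.Icc 1 (d - 1)).filter
        (fun k => d ∣ k * a ∧ ¬ d ∣ k * b ∧ ¬ d ∣ k * c ∧
          k * b % d + k * c % d = d)).card + 1 = Nat.gcd a d := by
  have hcop : Nat.Coprime (Nat.gcd (Nat.gcd a b) c) d := hgcd
  set g := Nat.gcd a d with hg
  have hgpos : 0 < g := Nat.gcd_pos_of_pos_right a hd
  obtain ⟨t, ht⟩ : g ∣ d := Nat.gcd_dvd_right a d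
  have htpos : 0 < t := by
    rcases Nat.eq_zero_or_pos t with h | h
    · subst h; simp at ht; omega
    · exact h
  obtain ⟨a', ha'⟩ : g ∣ a := Nat.gcd_dvd_left a d
  have hcop2 : Nat.Coprime a' t := by
    have := Nat.coprime_div_gcd_div_gcd (m := a) (n := d) hgpos
    rwa [← hg, ha', ht, Nat.mul_div_cancel_left _ hgpos,
      Nat.mul_div_cancel_left _ hgpos] at this
  -- d ∣ k*a ↔ t ∣ k
  have hdvdiff : ∀ k, d ∣ k * a ↔ t ∣ k := by
    intro k
    constructor
    · intro h
      rw [ht, ha'] at h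
      have h2 : g * t ∣ g * (k * a') := by
        have : k * (g * a') = g * (k * a') := by ring
        rwa [this] at h
      have h3 : t ∣ k * a' := (Nat.mul_dvd_mul_iff_left hgpos).mp h2
      exact (Nat.Coprime.dvd_of_dvd_mul_right hcop2.symm) h3
    · rintro ⟨m, rfl⟩
      exact ⟨m * a', by rw [ht, ha']; ring⟩
  -- key: on Icc 1 (d-1), the filter predicate is equivalent to t ∣ k
  have hrest : ∀ k, 1 ≤ k → k ≤ d - 1 → d ∣ k * a →
      (¬ d ∣ k * b ∧ ¬ d ∣ k * c ∧ k * b % d + k * c % d = d) := by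
    intro k hk1 hk2 hka
    have hkd : k < d := by omega
    have hbc : d ∣ k * (b + c) := by
      have h1 : d ∣ k * (a + b + c) := Dvd.dvd.mul_left hdvd k
      have h2 : k * (a + b + c) = k * a + k * (b + c) := by ring
      rw [h2] at h1
      exact (Nat.dvd_add_right hka).mp h1
    have hnotb : ¬ d ∣ k * b := by
      intro hkb
      have hkc : d ∣ k * c := by
        have : k * (b + c) = k * b + k * c := by ring
        rw [this] at hbc
        exact (Nat.dvd_add_right hkb).mp hbc
      have h1 : d ∣ k * Nat.gcd a b := by
        rw [← Nat.gcd_mul_left]; exact Nat.dvd_gcd hka hkb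
      have h2 : d ∣ k * Nat.gcd (Nat.gcd a b) c := by
        rw [← Nat.gcd_mul_left]; exact Nat.dvd_gcd h1 hkc
      have h3 : d ∣ k := Nat.Coprime.dvd_of_dvd_mul_right hcop.symm h2
      have := Nat.le_of_dvd (by omega) h3
      omega
    have hnotc : ¬ d ∣ k * c := by
      intro hkc
      apply hnotb
      have : k * (b + c) = k * c + k * b := by ring
      rw [this] at hbc
      exact (Nat.dvd_add_right hkc).mp hbc
    refine ⟨hnotb, hnotc, ?_⟩
    have hmod : (k * b % d + k * c % d) % d = 0 := by
      rw [← Nat.add_mod]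
      have heq : k * b + k * c = k * (b + c) := by ring
      rw [heq]
      obtain ⟨q, hq⟩ := hbc
      rw [hq]
      exact Nat.mul_mod_right d q
    have hx : k * b % d < d := Nat.mod_lt _ hd
    have hy : k * c % d < d := Nat.mod_lt _ hd
    have hx0 : k * b % d ≠ 0 := fun h => hnotb (Nat.dvd_of_mod_eq_zero h)
    have hdsum : d ∣ k * b % d + k * c % d := Nat.dvd_of_mod_eq_zero hmod
    have h1 : d ≤ k * b % d + k * c % d := Nat.le_of_dvd (by omega) hdsum
    have h2 : k * b % d + k * c % d - d = 0 :=
      Nat.eq_zero_of_dvd_of_lt (Nat.dvd_sub hdsum dvd_rfl) (by omega)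
    omega
  -- the filtered set is the image of Icc 1 (g-1) under (· * t)
  have himg : (Finset.Icc 1 (d - 1)).filter
        (fun k => d ∣ k * a ∧ ¬ d ∣ k * b ∧ ¬ d ∣ k * c ∧
          k * b % d + k * c % d = d) = (Finset.Icc 1 (g - 1)).image (· * t) := by
    ext k
    simp only [Finset.mem_filter, Finset.mem_image, Finset.mem_Icc]
    constructor
    · rintro ⟨⟨hk1, hk2⟩, hka, _⟩
      obtain ⟨m, rfl⟩ := (hdvdiff k).mp hka
      refine ⟨m, ⟨?_, ?_⟩, mul_comm m t⟩
      · rcases Nat.eq_zero_or_pos m with h | h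
        · subst h
          simp at hk1
        · exact h
      · by_contra hcon
        have hm : g ≤ m := by omega
        have h5 : g * t ≤ m * t := Nat.mul_le_mul_right t hm
        have h6 : t * m = m * t := mul_comm t m
        omega
    · rintro ⟨m, ⟨hm1, hm2⟩, rfl⟩
      have hk1 : 1 ≤ m * t := Nat.one_le_iff_ne_zero.mpr (by positivity)
      have hk2 : m * t ≤ d - 1 := by
        have h5 : m * t ≤ (g - 1) * t := Nat.mul_le_mul_right t hm2
        have h6 : (g - 1) * t + t = g * t := by
          have h7 : g - 1 + 1 = g := by omega
          calc (g - 1) * t + t = (g - 1 + 1) * t := by ring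
          _ = g * t := by rw [h7]
        omega
      have hka : d ∣ m * t * a := (hdvdiff _).mpr ⟨m, mul_comm m t⟩
      obtain ⟨h1, h2, h3⟩ := hrest _ hk1 hk2 hka
      exact ⟨⟨hk1, hk2⟩, hka, h1, h2, h3⟩
  rw [himg, Finset.card_image_of_injective _
    (fun x y h => Nat.eq_of_mul_eq_mul_right htpos h), Nat.card_Icc]
  omega
end

section
/- Let a, b, c, d be positive integers with d dividing a+b+c and gcd(a,b,c,d) = 1. Then the number of points of the lattice L = ℤ³ + ℤ·(a/d, b/d, c/d) lying in the closed triangle {(x,y,z) ∈ ℝ³ : x + y + z = 1, x ≥ 0, y ≥ 0, z ≥ 0} equals (d + 2 + gcd(a,d) + gcd(b,d) + gcd(c,d))/2. -/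
/-!
A point of `L` in the triangle is `m / d` with `m ∈ ℕ³`, `m₀ + m₁ + m₂ = d` and
`m ≡ k • (a, b, c) mod d` for some `k ∈ ℤ/d`. Apart from the three vertices (`k = 0`), these are
exactly the residue vectors `(ka mod d, kb mod d, kc mod d)` of the junior elements `k`, those of
age one, i.e. whose residues sum to `d`.

For `k ≠ 0` the residues of `k` and `-k` add up to `d` coordinatewise, except where they vanish;
as the residue sums are positive multiples of `d`, at most one residue vanishes, and exactly one of
`k, -k` is junior if none does, both if one does. Since `k * w = 0` has `gcd(w, d)` solutions
in `ℤ/d`, double counting gives `2 · #junior + 4 = d + gcd(a,d) + gcd(b,d) + gcd(c,d)`.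
-/

open Finset

variable {ι : Type*} {d : ℕ}

def residueVector (w : ι → ℕ) (k : ZMod d) : ι → ℕ := fun i => (k * w i).val

/-- `d` times the age of `k ∈ ℤ/d ≅ μ_d` acting on `ℂ^ι` with weights `w`. -/
def scaledAge [Fintype ι] (w : ι → ℕ) (k : ZMod d) : ℕ := ∑ i, residueVector w k i

def junior [Fintype ι] (w : ι → ℕ) (d : ℕ) [NeZero d] : Finset (ZMod d) :=
  {k | scaledAge w k = d}

lemma residueVector_injective [NeZero d] {w : ι → ℕ}
    (hw : ∀ k : ZMod d, (∀ i, k * w i = 0) → k = 0) :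
    Function.Injective (residueVector w (d := d)) := by
  intro k k' h
  rw [← sub_eq_zero]
  refine hw _ fun i => ?_
  rw [sub_mul, sub_eq_zero]
  exact ZMod.val_injective _ (congrFun h i)

lemma ZMod.card_mul_natCast_eq_zero (d w : ℕ) [NeZero d] :
    #{k : ZMod d | k * w = 0} = w.gcd d := by
  have := IsAddCyclic.card_nsmulAddMonoidHom_ker (ZMod d) w
  rw [Nat.card_zmod, Nat.gcd_comm] at this
  rw [← this, Nat.card_eq_fintype_card, Fintype.card_subtype]
  simp [mul_comm]

lemma ZMod.eq_zero_of_mul_natCast_eq_zero {a b c d : ℕ} [NeZero d]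
    (h : ((a.gcd b).gcd c).gcd d = 1) {k : ZMod d} (ha : k * a = 0) (hb : k * b = 0)
    (hc : k * c = 0) : k = 0 := by
  rw [← ZMod.natCast_zmod_val k] at ha hb hc ⊢
  simp only [← Nat.cast_mul, ZMod.natCast_eq_zero_iff] at ha hb hc ⊢
  have := Nat.dvd_gcd (Nat.dvd_gcd (Nat.dvd_gcd ha hb) hc) (dvd_mul_left d k.val)
  rwa [Nat.gcd_mul_left, Nat.gcd_mul_left, Nat.gcd_mul_left, h, mul_one] at this

lemma ite_add_ite_eq_one_add_of_dvd {d s t z : ℕ} (hd : 0 < d) (hs : d ∣ s) (ht : d ∣ t)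
    (hs0 : s ≠ 0) (ht0 : t ≠ 0) (hst : s + t = (3 - z) * d) :
    (if s = d then 1 else 0) + (if t = d then 1 else 0) = 1 + z := by
  obtain ⟨m, rfl⟩ := hs
  obtain ⟨n, rfl⟩ := ht
  have hmn : m + n = 3 - z := Nat.eq_of_mul_eq_mul_left hd (by linarith)
  simp only [mul_eq_left₀ hd.ne', ne_eq, mul_eq_zero, not_or] at *
  split_ifs <;> omega

section Age

variable [Fintype ι] {w : ι → ℕ}

lemma scaledAge_ne_zero (hw : ∀ k : ZMod d, (∀ i, k * w i = 0) → k = 0) {k : ZMod d}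
    (hk : k ≠ 0) : scaledAge w k ≠ 0 := by
  obtain ⟨i, hi⟩ : ∃ i, k * w i ≠ 0 := not_forall.1 (mt (hw k) hk)
  rw [scaledAge, Ne, sum_eq_zero_iff]
  exact fun h => hi ((ZMod.val_eq_zero _).1 (h i (mem_univ i)))

variable [NeZero d]

lemma dvd_scaledAge (hw : d ∣ ∑ i, w i) (k : ZMod d) : d ∣ scaledAge w k := by
  rw [← ZMod.natCast_eq_zero_iff, scaledAge, Nat.cast_sum]
  simp_rw [residueVector, ZMod.natCast_zmod_val, ← mul_sum, ← Nat.cast_sum,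
    (ZMod.natCast_eq_zero_iff (∑ i, w i) d).2 hw, mul_zero]

lemma scaledAge_add_scaledAge_neg (k : ZMod d) :
    scaledAge w k + scaledAge w (-k) = #{i | k * w i ≠ 0} * d := by
  calc scaledAge w k + scaledAge w (-k) = ∑ i, if k * w i ≠ 0 then d else 0 := by
        rw [scaledAge, scaledAge, ← sum_add_distrib]
        refine sum_congr rfl fun i _ => ?_
        have := ZMod.val_lt (k * (w i : ZMod d))
        by_cases h : k * w i = 0 <;> simp [residueVector, neg_mul, ZMod.neg_val, h]
        omega
    _ = _ := by rw [← sum_filter, sum_const, smul_eq_mul]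

lemma ite_mem_junior_add_ite_neg_mem_junior (hι : Fintype.card ι = 3) (hsum : d ∣ ∑ i, w i)
    (hw : ∀ k : ZMod d, (∀ i, k * w i = 0) → k = 0) {k : ZMod d} (hk : k ≠ 0) :
    (if k ∈ junior w d then 1 else 0) + (if -k ∈ junior w d then 1 else 0)
      = 1 + #{i | k * w i = 0} := by
  simp only [junior, mem_filter, mem_univ, true_and]
  refine ite_add_ite_eq_one_add_of_dvd (NeZero.pos d) (dvd_scaledAge hsum k)
    (dvd_scaledAge hsum (-k)) (scaledAge_ne_zero hw hk)
    (scaledAge_ne_zero hw (neg_ne_zero.2 hk)) ?_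
  rw [scaledAge_add_scaledAge_neg, ← hι, ← card_univ,
    ← card_filter_add_card_filter_not (s := univ) (fun i => k * w i = 0)]
  simp

lemma two_mul_card_junior_add_four (hι : Fintype.card ι = 3) (hsum : d ∣ ∑ i, w i)
    (hw : ∀ k : ZMod d, (∀ i, k * w i = 0) → k = 0) :
    2 * #(junior w d) + 4 = d + ∑ i, (w i).gcd d := by
  have hcard : #(junior w d) = ∑ k : ZMod d, if k ∈ junior w d then 1 else 0 := by simp
  have hneg : ∑ k : ZMod d, (if -k ∈ junior w d then 1 else 0) = #(junior w d) :=
    hcard ▸ Equiv.sum_comp (Equiv.neg _) fun k => if k ∈ junior w d then 1 else 0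
  have hzero : (0 : ZMod d) ∉ junior w d := by
    rw [junior, mem_filter]
    simp [scaledAge, residueVector, (NeZero.ne d).symm]
  have hdouble : ∑ k : ZMod d, (1 + #{i | k * w i = 0}) = d + ∑ i, (w i).gcd d := by
    rw [sum_add_distrib, sum_const, card_univ, ZMod.card, smul_eq_mul, mul_one]
    congr 1
    exact (sum_card_bipartiteAbove_eq_sum_card_bipartiteBelow
      (r := fun (k : ZMod d) i => k * w i = 0)).trans
      (sum_congr rfl fun i _ => ZMod.card_mul_natCast_eq_zero d (w i))
  calc 2 * #(junior w d) + 4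
      = ∑ k, ((if k ∈ junior w d then 1 else 0) + (if -k ∈ junior w d then 1 else 0)) + 4 := by
        rw [sum_add_distrib, hneg, ← hcard, two_mul]
    _ = ∑ k ∈ univ.erase (0 : ZMod d), (1 + #{i | k * w i = 0})
          + (1 + #{i | (0 : ZMod d) * w i = 0}) := by
        rw [← add_sum_erase _ _ (mem_univ (0 : ZMod d)), neg_zero, if_neg hzero, zero_add,
          zero_add, sum_congr rfl fun k hk =>
            ite_mem_junior_add_ite_neg_mem_junior hι hsum hw (ne_of_mem_erase hk)]
        simp [hι]
    _ = d + ∑ i, (w i).gcd d := by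
        rw [add_comm, add_sum_erase _ (fun k : ZMod d => 1 + #{i | k * w i = 0}) (mem_univ 0),
          hdouble]

end Age

def scaledSimplexPoints [Fintype ι] (w : ι → ℕ) (d : ℕ) : Set (ι → ℕ) :=
  {m | ∑ i, m i = d ∧ ∃ k : ZMod d, ∀ i, (m i : ZMod d) = k * w i}

def latticeSimplexPoints [Fintype ι] (w : ι → ℕ) (d : ℕ) : Set (ι → ℝ) :=
  {p | (∃ z : ι → ℤ, ∃ k : ℤ, ∀ i, p i = z i + k * ((w i : ℝ) / d)) ∧ ∑ i, p i = 1 ∧ ∀ i, 0 ≤ p i}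

section Simplex

variable [Fintype ι] [NeZero d] (w : ι → ℕ)

lemma scaledSimplexPoints_eq [DecidableEq ι] : scaledSimplexPoints w d =
    Set.range (fun i => Pi.single i d) ∪ residueVector w '' (junior w d : Set (ZMod d)) := by
  ext m
  constructor
  · rintro ⟨hsum, k, hk⟩
    by_cases h : ∃ i, m i = d
    · obtain ⟨i, hi⟩ := h
      have hrest : ∑ j ∈ univ.erase i, m j = 0 := by
        rw [← add_sum_erase _ _ (mem_univ i), hi] at hsum
        omega
      refine Or.inl ⟨i, funext fun j => ?_⟩
      rcases eq_or_ne j i with rfl | hj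
      · simp [hi]
      · simp [hj, sum_eq_zero_iff.1 hrest j (mem_erase.2 ⟨hj, mem_univ j⟩)]
    · have hlt : ∀ i, m i < d := fun i =>
        (hsum ▸ single_le_sum (fun j _ => Nat.zero_le (m j)) (mem_univ i)).lt_of_ne
          fun hi => h ⟨i, hi⟩
      have hm : residueVector w k = m :=
        funext fun i => by rw [residueVector, ← hk, ZMod.val_natCast_of_lt (hlt i)]
      refine Or.inr ⟨k, ?_, hm⟩
      rw [mem_coe, junior, mem_filter]
      subst hm
      exact ⟨mem_univ k, hsum⟩
  · rintro (⟨i, rfl⟩ | ⟨k, hk, rfl⟩)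
    · refine ⟨by simp, 0, fun j => ?_⟩
      show ((Pi.single i d : ι → ℕ) j : ZMod d) = 0 * w j
      rw [zero_mul, Pi.single_apply]
      split_ifs <;> simp
    · exact ⟨(mem_filter.1 hk).2, k, fun i => ZMod.natCast_zmod_val _⟩

lemma ncard_scaledSimplexPoints (hw : ∀ k : ZMod d, (∀ i, k * w i = 0) → k = 0) :
    (scaledSimplexPoints w d).ncard = Fintype.card ι + #(junior w d) := by
  classical
  have hdisj : Disjoint (Set.range fun i => Pi.single i d)
      (residueVector w '' (junior w d : Set (ZMod d))) := by
    refine Set.disjoint_left.2 ?_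
    rintro _ ⟨i, rfl⟩ ⟨k, -, hk⟩
    have := congrFun hk i
    simp only [residueVector, Pi.single_eq_same] at this
    exact (ZMod.val_lt _).ne this
  have hinj : Function.Injective fun i : ι => (Pi.single i d : ι → ℕ) := fun i j h => by
    by_contra hij
    simpa [Pi.single_apply, hij, NeZero.ne d] using congrFun h i
  rw [scaledSimplexPoints_eq, Set.ncard_union_eq hdisj, Set.ncard_range_of_injective hinj,
    Nat.card_eq_fintype_card, Set.ncard_image_of_injective _ (residueVector_injective hw),
    Set.ncard_coe_finset]

lemma latticeSimplexPoints_subset_image :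
    latticeSimplexPoints w d ⊆ (fun m i => (m i : ℝ) / d) '' scaledSimplexPoints w d := by
  have hd : (d : ℝ) ≠ 0 := NeZero.ne _
  rintro p ⟨⟨z, k, hp⟩, hsum, hnn⟩
  set n : ι → ℤ := fun i => d * z i + k * w i
  have hn : ∀ i, (n i : ℝ) = d * p i := fun i => by
    simp only [n, hp i]
    push_cast
    field_simp
  have hn0 : ∀ i, 0 ≤ n i := fun i => by
    have : (0 : ℝ) ≤ n i := hn i ▸ mul_nonneg (Nat.cast_nonneg d) (hnn i)
    exact_mod_cast this
  have hm : ∀ i, ((n i).toNat : ℝ) = d * p i := fun i => by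
    rw [← Int.cast_natCast, Int.toNat_of_nonneg (hn0 i), hn i]
  refine ⟨fun i => (n i).toNat, ⟨?_, k, fun i => ?_⟩, funext fun i => ?_⟩
  · exact_mod_cast (show (∑ i, ((n i).toNat : ℝ)) = d by
      simp_rw [hm, ← mul_sum, hsum, mul_one])
  · rw [← Int.cast_natCast, Int.toNat_of_nonneg (hn0 i)]
    simp [n]
  · simp only [hm]
    field_simp

lemma image_subset_latticeSimplexPoints :
    (fun m i => (m i : ℝ) / d) '' scaledSimplexPoints w d ⊆ latticeSimplexPoints w d := by
  have hd : (d : ℝ) ≠ 0 := NeZero.ne _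
  rintro _ ⟨m, ⟨hsum, k, hk⟩, rfl⟩
  have hdvd : ∀ i, ∃ z : ℤ, (m i : ℤ) - k.val * w i = d * z := fun i =>
    (ZMod.intCast_eq_intCast_iff_dvd_sub _ _ d).1 (by push_cast; rw [hk i, ZMod.natCast_zmod_val])
  choose z hz using hdvd
  refine ⟨⟨z, k.val, fun i => ?_⟩, ?_, fun i => by positivity⟩
  · have := congrArg (Int.cast : ℤ → ℝ) (hz i)
    push_cast at this ⊢
    field_simp
    linarith
  · rw [← sum_div, ← Nat.cast_sum, hsum, div_self hd]

lemma ncard_latticeSimplexPoints (hw : ∀ k : ZMod d, (∀ i, k * w i = 0) → k = 0) :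
    (latticeSimplexPoints w d).ncard = Fintype.card ι + #(junior w d) := by
  have hinj : Function.Injective fun (m : ι → ℕ) i => (m i : ℝ) / d := fun m m' h =>
    funext fun i => by exact_mod_cast (div_left_inj' (NeZero.ne (d : ℝ))).1 (congrFun h i)
  rw [(latticeSimplexPoints_subset_image w).antisymm (image_subset_latticeSimplexPoints w),
    Set.ncard_image_of_injective _ hinj, ncard_scaledSimplexPoints w hw]

end Simplex

theorem stmt_3_general (a b c d : ℕ) (hd : 0 < d)
    (hdvd : d ∣ a + b + c)
    (hgcd : Nat.gcd (Nat.gcd (Nat.gcd a b) c) d = 1) :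
    2 * ({ p : Fin 3 → ℝ |
        (∃ z : Fin 3 → ℤ, ∃ k : ℤ,
          p 0 = z 0 + k * ((a : ℝ) / d) ∧
          p 1 = z 1 + k * ((b : ℝ) / d) ∧
          p 2 = z 2 + k * ((c : ℝ) / d)) ∧
        p 0 + p 1 + p 2 = 1 ∧ (∀ i, 0 ≤ p i) }.ncard)
      = d + 2 + Nat.gcd a d + Nat.gcd b d + Nat.gcd c d := by
  have : NeZero d := ⟨hd.ne'⟩
  have hS : { p : Fin 3 → ℝ |
        (∃ z : Fin 3 → ℤ, ∃ k : ℤ,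
          p 0 = z 0 + k * ((a : ℝ) / d) ∧
          p 1 = z 1 + k * ((b : ℝ) / d) ∧
          p 2 = z 2 + k * ((c : ℝ) / d)) ∧
        p 0 + p 1 + p 2 = 1 ∧ (∀ i, 0 ≤ p i) } = latticeSimplexPoints ![a, b, c] d := by
    ext p
    simp [latticeSimplexPoints, Fin.forall_fin_succ, Fin.sum_univ_three]
  have hw : ∀ k : ZMod d, (∀ i, k * (![a, b, c] i : ZMod d) = 0) → k = 0 := fun k hk =>
    ZMod.eq_zero_of_mul_natCast_eq_zero hgcd (hk 0) (hk 1) (hk 2)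
  have hcount := two_mul_card_junior_add_four (Fintype.card_fin 3)
    (by simpa [Fin.sum_univ_three] using hdvd) hw
  rw [hS, ncard_latticeSimplexPoints _ hw, Fintype.card_fin]
  simp only [Fin.sum_univ_three, Matrix.cons_val_zero, Matrix.cons_val_one, Matrix.cons_val]
    at hcount
  omega

/-- The number of points of the lattice `L = ℤ³ + ℤ·(a/d, b/d, c/d)` lying in the
closed triangle `{x + y + z = 1, x,y,z ≥ 0}` equals
`(d + 2 + gcd(a,d) + gcd(b,d) + gcd(c,d))/2`. -/
theorem stmt_3 (a b c d : ℕ) (ha : 0 < a) (hb : 0 < b) (hc : 0 < c) (hd : 0 < d)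
    (hdvd : d ∣ a + b + c)
    (hgcd : Nat.gcd (Nat.gcd (Nat.gcd a b) c) d = 1) :
    2 * ({ p : Fin 3 → ℝ |
        (∃ z : Fin 3 → ℤ, ∃ k : ℤ,
          p 0 = z 0 + k * ((a : ℝ) / d) ∧
          p 1 = z 1 + k * ((b : ℝ) / d) ∧
          p 2 = z 2 + k * ((c : ℝ) / d)) ∧
        p 0 + p 1 + p 2 = 1 ∧ (∀ i, 0 ≤ p i) }.ncard)
      = d + 2 + Nat.gcd a d + Nat.gcd b d + Nat.gcd c d :=
  stmt_3_general a b c d hd hdvd hgcd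
end

section
/- Let a, b, m, n, d be positive integers with d = m·a = n·b. Consider the action of ℂ* on ℂ² \ {0} given by t·(x,y) = (t^a x, t^b y). Then the set of orbits of solutions of x^m + y^n = 0 in ℂ² \ {0} has exactly d/lcm(a,b) elements. -/
/-!
Write `a = a' g`, `b = b' g` with `a'`, `b'` coprime. Since every unit of `ℂ` is a `g`-th power,
the weights `(a, b)` and `(a', b')` have the same orbits, and `m = b' k`, `n = a' k` with
`k = d / lcm(a, b)`. On a solution both coordinates are nonzero, and the ratio `x^b' / y^a'`
is invariant under the action, satisfies `(x^b' / y^a')^k = -1`, and separates orbits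
(as `a'`, `b'` are coprime). So the orbits are in bijection with the `k` roots of `z^k = -1`.
-/

open Polynomial

theorem IsPrimitiveRoot.natCard_pow_eq {R : Type*} [CommRing R] [IsDomain R] {ζ : R} {k : ℕ}
    (hζ : IsPrimitiveRoot ζ k) (hk : 0 < k) {a : R} (ha : a ≠ 0) (hex : ∃ α, α ^ k = a) :
    Nat.card {z : R // z ^ k = a} = k := by
  classical
  have hcard : (nthRootsFinset k a).card = k := by
    rw [nthRootsFinset_def, Multiset.toFinset_card_of_nodup (hζ.nthRoots_nodup ha),
      hζ.card_nthRoots, if_pos hex]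
  rw [← Nat.card_eq_finsetCard] at hcard
  exact (Nat.card_congr <| Equiv.subtypeEquivRight fun z =>
    (Polynomial.mem_nthRootsFinset hk a).symm).trans hcard

theorem exists_pow_eq_one_and_pow_eq_of_coprime {M : Type*} [Monoid M] {a b : ℕ}
    (hab : a.Coprime b) (hb : b ≠ 0) {u : M} (hu : u ^ b = 1) :
    ∃ t : M, t ^ b = 1 ∧ t ^ a = u := by
  obtain ⟨c, -, hc⟩ := Nat.exists_mul_mod_eq_of_coprime 1 hab hb
  refine ⟨u ^ c, by rw [← pow_mul, mul_comm, pow_mul, hu, one_pow], ?_⟩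
  rw [← pow_mul, mul_comm, pow_eq_pow_mod _ hu, hc, ← pow_eq_pow_mod _ hu, pow_one]

section WeightedAction

variable {K : Type*} [Field K]

theorem exists_units_pow_mul_weights_iff [IsAlgClosed K] {g : ℕ} (hg : 0 < g) (a b : ℕ)
    (x y x' y' : K) :
    (∃ t : Kˣ, x' = (t : K) ^ (a * g) * x ∧ y' = (t : K) ^ (b * g) * y) ↔
      ∃ t : Kˣ, x' = (t : K) ^ a * x ∧ y' = (t : K) ^ b * y := by
  constructor
  · rintro ⟨t, hx, hy⟩
    exact ⟨t ^ g, by simpa [← pow_mul'] using hx, by simpa [← pow_mul'] using hy⟩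
  · rintro ⟨t, hx, hy⟩
    obtain ⟨s, hs⟩ := IsAlgClosed.exists_pow_nat_eq (t : K) hg
    have hs0 : s ≠ 0 := by rintro rfl; exact t.ne_zero (by rw [← hs, zero_pow hg.ne'])
    exact ⟨Units.mk0 s hs0, by rw [Units.val_mk0, pow_mul', hs, hx],
      by rw [Units.val_mk0, pow_mul', hs, hy]⟩

theorem ne_zero_and_ne_zero_of_pow_add_pow_eq_zero {m n : ℕ} (hm : 0 < m) (hn : 0 < n)
    {x y : K} (hxy : (x, y) ≠ 0) (h : x ^ m + y ^ n = 0) : x ≠ 0 ∧ y ≠ 0 := by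
  constructor
  · rintro rfl
    rw [zero_pow hm.ne', zero_add, pow_eq_zero_iff hn.ne'] at h
    exact hxy (by rw [h]; rfl)
  · rintro rfl
    rw [zero_pow hn.ne', add_zero, pow_eq_zero_iff hm.ne'] at h
    exact hxy (by rw [h]; rfl)

theorem weighted_ratio_invariant (a b : ℕ) {t : K} (ht : t ≠ 0) (x y : K) :
    (t ^ a * x) ^ b / (t ^ b * y) ^ a = x ^ b / y ^ a := by
  rw [mul_pow, mul_pow, ← pow_mul, ← pow_mul, mul_comm a b,
    mul_div_mul_left _ _ (pow_ne_zero _ ht)]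

theorem weighted_ratio_pow_eq_neg_one {a b k : ℕ} {x y : K} (hy : y ≠ 0)
    (h : x ^ (b * k) + y ^ (a * k) = 0) : (x ^ b / y ^ a) ^ k = -1 := by
  rw [div_pow, ← pow_mul, ← pow_mul, eq_neg_of_add_eq_zero_left h, neg_div,
    div_self (pow_ne_zero _ hy)]

theorem exists_weighted_mul_eq_of_ratio_eq [IsAlgClosed K] {a b : ℕ} (hab : a.Coprime b)
    (hb : 0 < b) {x y x' y' : K} (hx : x ≠ 0) (hy : y ≠ 0) (hy' : y' ≠ 0)
    (h : x ^ b / y ^ a = x' ^ b / y' ^ a) :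
    ∃ t : K, t ≠ 0 ∧ x' = t ^ a * x ∧ y' = t ^ b * y := by
  obtain ⟨s, hs⟩ := IsAlgClosed.exists_pow_nat_eq (y' / y) hb
  have hs0 : s ≠ 0 := by
    rintro rfl; exact div_ne_zero hy' hy (by rw [← hs, zero_pow hb.ne'])
  have hu : (x' / (s ^ a * x)) ^ b = 1 := by
    rw [div_pow, mul_pow, ← pow_mul, mul_comm a b, pow_mul, hs, div_pow]
    rw [div_eq_div_iff (pow_ne_zero _ hy) (pow_ne_zero _ hy')] at h
    field_simp
    linear_combination -h
  obtain ⟨r, hr1, hra⟩ := exists_pow_eq_one_and_pow_eq_of_coprime hab hb.ne' hu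
  refine ⟨r * s, mul_ne_zero (by rintro rfl; simp [hb.ne'] at hr1) hs0, ?_, ?_⟩
  · rw [mul_pow, hra]
    field_simp
  · rw [mul_pow, hr1, one_mul, hs, div_mul_cancel₀ _ hy]

theorem natCard_weighted_orbits_eq_natCard_pow_eq_neg_one [IsAlgClosed K] {a b k : ℕ}
    (ha : 0 < a) (hb : 0 < b) (hk : 0 < k) (hab : a.Coprime b) :
    Nat.card (Quot (fun p q : {p : K × K // p ≠ 0 ∧ p.1 ^ (b * k) + p.2 ^ (a * k) = 0} =>
      ∃ t : Kˣ, q.1.1 = (t : K) ^ a * p.1.1 ∧ q.1.2 = (t : K) ^ b * p.1.2)) =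
      Nat.card {z : K // z ^ k = -1} := by
  have hne (p : {p : K × K // p ≠ 0 ∧ p.1 ^ (b * k) + p.2 ^ (a * k) = 0}) :
      p.1.1 ≠ 0 ∧ p.1.2 ≠ 0 :=
    ne_zero_and_ne_zero_of_pow_add_pow_eq_zero (by positivity) (by positivity) p.2.1 p.2.2
  refine Nat.card_congr <| Equiv.ofBijective (Quot.lift (fun p =>
    ⟨p.1.1 ^ b / p.1.2 ^ a, weighted_ratio_pow_eq_neg_one (hne p).2 p.2.2⟩) ?_) ⟨?_, ?_⟩
  · rintro p q ⟨t, hx, hy⟩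
    exact Subtype.ext (by simp only [hx, hy, weighted_ratio_invariant a b t.ne_zero])
  · rintro ⟨p⟩ ⟨q⟩ h
    obtain ⟨t, ht, hx, hy⟩ := exists_weighted_mul_eq_of_ratio_eq hab hb (hne p).1 (hne p).2
      (hne q).2 (congrArg Subtype.val h)
    exact Quot.sound ⟨Units.mk0 t ht, hx, hy⟩
  · rintro ⟨z, hz⟩
    obtain ⟨x, hx⟩ := IsAlgClosed.exists_pow_nat_eq z hb
    exact ⟨Quot.mk _ ⟨(x, 1), by simp, by simp [pow_mul, hx, hz]⟩,
      Subtype.ext (by simp [hx])⟩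

end WeightedAction

theorem stmt_5_general (a b m n d : ℕ) (ha : 0 < a) (hm : 0 < m) (hma : d = m * a) (hnb : d = n * b) :
    Nat.card (Quot (fun (p q : {p : ℂ × ℂ // p ≠ 0 ∧ p.1 ^ m + p.2 ^ n = 0}) =>
      ∃ t : ℂˣ, q.1.1 = (t : ℂ) ^ a * p.1.1 ∧ q.1.2 = (t : ℂ) ^ b * p.1.2))
      = d / Nat.lcm a b := by
  obtain ⟨g, a, b, hg, hab, rfl, rfl⟩ := Nat.exists_coprime' (Nat.gcd_pos_of_pos_left b ha)
  have hmn : m * a = b * n := by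
    apply Nat.eq_of_mul_eq_mul_right hg; rw [mul_comm b, mul_assoc, mul_assoc, ← hma, hnb]
  obtain ⟨k, rfl⟩ : b ∣ m := hab.symm.dvd_of_dvd_mul_right ⟨n, hmn⟩
  have ha' : 0 < a := Nat.pos_of_mul_pos_right ha
  have hb' : 0 < b := Nat.pos_of_mul_pos_right hm
  have hk : 0 < k := Nat.pos_of_mul_pos_left hm
  obtain rfl : n = a * k := by
    apply Nat.eq_of_mul_eq_mul_left hb'; rw [← hmn]; ring
  simp_rw [exists_units_pow_mul_weights_iff hg]
  rw [natCard_weighted_orbits_eq_natCard_pow_eq_neg_one ha' hb' hk hab,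
    (Complex.isPrimitiveRoot_exp k hk.ne').natCard_pow_eq hk (by norm_num)
      (IsAlgClosed.exists_pow_nat_eq _ hk),
    hma, Nat.lcm_mul_right, hab.lcm_eq_mul, show b * k * (a * g) = k * (a * b * g) by ring,
    Nat.mul_div_cancel _ (by positivity)]

/-- The number of ℂ*-orbits (with weights `(a,b)`) of solutions of `x^m + y^n = 0`
in `ℂ² \ {0}`, where `d = m·a = n·b`, is `d / lcm(a,b)`. -/
theorem stmt_5 (a b m n d : ℕ) (ha : 0 < a) (hb : 0 < b) (hm : 0 < m) (hn : 0 < n)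
    (hd : 0 < d) (hma : d = m * a) (hnb : d = n * b) :
    Nat.card (Quot (fun (p q : {p : ℂ × ℂ // p ≠ 0 ∧ p.1 ^ m + p.2 ^ n = 0}) =>
      ∃ t : ℂˣ, q.1.1 = (t : ℂ) ^ a * p.1.1 ∧ q.1.2 = (t : ℂ) ^ b * p.1.2))
      = d / Nat.lcm a b :=
  stmt_5_general a b m n d ha hm hma hnb
end

section
/- Consider the action of ℂ* on ℂ² \ {0} given by t·(x,y) = (t² x, t³ y). The set of orbits of solutions of x^15 + y^10 = 0 in ℂ² \ {0} has exactly 5 elements. -/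
/-!
Both coordinates of a solution are nonzero, and orbits of pairs of nonzero numbers under the
weights `(2, 3)` are classified by `x³/y²`: as `gcd(2, 3) = 1`, two pairs with the same invariant
are related by `t = t³/t² = (y'/y)/(x'/x)`. The equation says exactly that `-x³/y²` is a fifth
root of unity, and every fifth root of unity `v` is attained, at `(-v, -v)`.
-/

open Polynomial

theorem IsPrimitiveRoot.card_pow_eq_one {R : Type*} [CommRing R] [IsDomain R] {ζ : R} {n : ℕ}
    (h : IsPrimitiveRoot ζ n) (hn : 0 < n) : Nat.card {x : R // x ^ n = 1} = n :=
  calc Nat.card {x : R // x ^ n = 1} = Nat.card (nthRootsFinset n (1 : R)) :=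
        Nat.card_congr <|
          Equiv.subtypeEquivRight fun _ ↦ (Polynomial.mem_nthRootsFinset hn (1 : R)).symm
    _ = n := by rw [Nat.card_eq_finsetCard, h.card_nthRootsFinset]

section

variable {K : Type*} [Field K]

theorem exists_units_weighted_smul_iff {x y x' y' : K} (hx : x ≠ 0) (hy : y ≠ 0) (hx' : x' ≠ 0)
    (hy' : y' ≠ 0) :
    (∃ t : Kˣ, x' = t ^ 2 * x ∧ y' = t ^ 3 * y) ↔ x' ^ 3 * y ^ 2 = x ^ 3 * y' ^ 2 := by
  refine ⟨fun ⟨t, hx't, hy't⟩ ↦ by rw [hx't, hy't]; ring, fun h ↦ ?_⟩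
  refine ⟨Units.mk0 (x * y' / (x' * y)) (by simp [*]), ?_, ?_⟩
  · rw [Units.val_mk0]
    field_simp
    linear_combination h
  · rw [Units.val_mk0]
    field_simp
    linear_combination h

variable (K)

abbrev Solutions : Type _ := {p : K × K // p ≠ 0 ∧ p.1 ^ 15 + p.2 ^ 10 = 0}

def weightedRel (p q : Solutions K) : Prop :=
  ∃ t : Kˣ, q.1.1 = (t : K) ^ 2 * p.1.1 ∧ q.1.2 = (t : K) ^ 3 * p.1.2

variable {K}

namespace Solutions

theorem fst_ne_zero_and_snd_ne_zero (p : Solutions K) : p.1.1 ≠ 0 ∧ p.1.2 ≠ 0 := by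
  obtain ⟨⟨x, y⟩, hne, heq⟩ := p
  simp only [ne_eq, Prod.mk_eq_zero] at hne ⊢
  constructor
  · rintro rfl
    exact hne ⟨rfl, pow_eq_zero_iff (n := 10) (by norm_num) |>.mp (by linear_combination heq)⟩
  · rintro rfl
    exact hne ⟨pow_eq_zero_iff (n := 15) (by norm_num) |>.mp (by linear_combination heq), rfl⟩

def invariant (p : Solutions K) : {v : K // v ^ 5 = 1} :=
  ⟨-(p.1.1 ^ 3 / p.1.2 ^ 2), by
    obtain ⟨hx, hy⟩ := p.fst_ne_zero_and_snd_ne_zero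
    field_simp
    linear_combination -p.2.2⟩

def ofRootOfUnity (v : {v : K // v ^ 5 = 1}) : Solutions K :=
  ⟨(-v.1, -v.1), by
    have hv : v.1 ≠ 0 := (IsUnit.of_pow_eq_one v.2 (by norm_num)).ne_zero
    refine ⟨by simp [hv], ?_⟩
    linear_combination -v.1 ^ 10 * v.2⟩

theorem invariant_ofRootOfUnity (v : {v : K // v ^ 5 = 1}) : (ofRootOfUnity v).invariant = v := by
  have hv : v.1 ≠ 0 := (IsUnit.of_pow_eq_one v.2 (by norm_num)).ne_zero
  ext
  simp only [invariant, ofRootOfUnity]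
  field_simp

theorem weightedRel_iff_invariant_eq (p q : Solutions K) :
    weightedRel K p q ↔ p.invariant = q.invariant := by
  obtain ⟨hx, hy⟩ := p.fst_ne_zero_and_snd_ne_zero
  obtain ⟨hx', hy'⟩ := q.fst_ne_zero_and_snd_ne_zero
  rw [weightedRel, exists_units_weighted_smul_iff hx hy hx' hy', invariant, invariant,
    Subtype.mk.injEq, neg_inj, div_eq_div_iff (pow_ne_zero 2 hy) (pow_ne_zero 2 hy')]
  constructor <;> intro h <;> linear_combination -h

end Solutions

def orbitsEquivRootsOfUnity : Quot (weightedRel K) ≃ {v : K // v ^ 5 = 1} where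
  toFun := Quot.lift Solutions.invariant fun p q h ↦
    (Solutions.weightedRel_iff_invariant_eq p q).mp h
  invFun v := Quot.mk _ (Solutions.ofRootOfUnity v)
  left_inv := Quot.ind fun _ ↦ Quot.sound <|
    (Solutions.weightedRel_iff_invariant_eq _ _).mpr (Solutions.invariant_ofRootOfUnity _)
  right_inv := Solutions.invariant_ofRootOfUnity

end

/-- The set of orbits of solutions of `x^15 + y^10 = 0` in `ℂ² \ {0}` under the
ℂ*-action `t·(x,y) = (t²x, t³y)` has exactly 5 elements. -/
theorem stmt_6 :
    Nat.card (Quot (fun (p q : {p : ℂ × ℂ // p ≠ 0 ∧ p.1 ^ 15 + p.2 ^ 10 = 0}) =>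
      ∃ t : ℂˣ, q.1.1 = (t : ℂ) ^ 2 * p.1.1 ∧ q.1.2 = (t : ℂ) ^ 3 * p.1.2)) = 5 :=
  (Nat.card_congr orbitsEquivRootsOfUnity).trans
    ((Complex.isPrimitiveRoot_exp 5 (by norm_num)).card_pow_eq_one (by norm_num))
end
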